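/- arXiv:2211.08711 — 6 statements merged into one kernel-verified Lean document; each statement's English description precedes it below -/
import Mathlib

section
/- For every real $\delta > 0$ and every positive integer $k$, $\sum_{i=1}^{k} \exp\left(-2(1+\delta)^{i-1}\right) \le 1 + \frac{1}{\delta}$. -/
theorem sum_exp_le (δ : ℝ) (hδ : 0 < δ) (k : ℕ) (hk : 1 ≤ k) :
    ∑ i ∈ Finset.Icc 1 k, Real.exp (-2 * (1 + δ) ^ (i - 1)) ≤ 1 + 1 / δ := by
  set r := Real.exp (-(2*δ)) with hrdef
  have hr0 : 0 < r := Real.exp_pos _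
  have hr1 : r < 1 := Real.exp_lt_one_iff.mpr (by linarith)
  have h0 : (0:ℝ) < 1 + 2*δ := by positivity
  -- per-term bound
  have key : ∀ i ∈ Finset.Icc 1 k,
      Real.exp (-2 * (1 + δ) ^ (i - 1)) ≤ Real.exp (-2) * r ^ (i - 1) := by
    intro i _
    have h1 : Real.exp (-2) * r ^ (i - 1) = Real.exp (-2 + (i-1 : ℕ) * (-(2*δ))) := by
      rw [Real.exp_add, Real.exp_nat_mul]
    rw [h1]
    apply Real.exp_le_exp.mpr
    have hB : 1 + ((i-1 : ℕ) : ℝ) * δ ≤ (1 + δ) ^ (i - 1) :=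
      one_add_mul_le_pow (show (-2:ℝ) ≤ δ by linarith) (i - 1)
    nlinarith [(Nat.cast_nonneg (i-1) : (0:ℝ) ≤ ((i-1:ℕ):ℝ))]
  have hsum := Finset.sum_le_sum key
  have hgeo : ∑ i ∈ Finset.Icc 1 k, Real.exp (-2) * r ^ (i - 1)
      = Real.exp (-2) * ∑ j ∈ Finset.range k, r ^ j := by
    rw [Finset.mul_sum, ← Finset.Ico_add_one_right_eq_Icc, Finset.sum_Ico_eq_sum_range]
    simp
  have hd : (0:ℝ) < 1 - r := by linarith
  have hgs : ∑ j ∈ Finset.range k, r ^ j ≤ (1 - r)⁻¹ := by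
    rw [geom_sum_eq (ne_of_lt hr1)]
    rw [div_le_iff_of_neg (by linarith : r - 1 < 0)]
    have e : (1-r)⁻¹ * (r-1) = -1 := by field_simp; ring
    have h := pow_nonneg (le_of_lt hr0) k
    linarith
  have he2 : Real.exp (-2) ≤ 1/2 := by
    rw [Real.exp_neg]
    rw [inv_le_comm₀ (Real.exp_pos 2) (by norm_num)]
    have := Real.add_one_le_exp (2:ℝ)
    linarith
  have hrle : r ≤ 1 / (1 + 2*δ) := by
    have hx : 1 + 2*δ ≤ Real.exp (2*δ) := by linarith [Real.add_one_le_exp (2*δ)]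
    rw [hrdef, Real.exp_neg, one_div]
    gcongr
  have h1r : 2*δ / (1 + 2*δ) ≤ 1 - r := by
    rw [div_le_iff₀ h0]
    have h2 : r * (1+2*δ) ≤ 1 := by
      have := mul_le_mul_of_nonneg_right hrle (le_of_lt h0)
      rwa [one_div, inv_mul_cancel₀ (ne_of_gt h0)] at this
    nlinarith
  have hinv : (1 - r)⁻¹ ≤ (1 + 2*δ) / (2*δ) := by
    have e : (1+2*δ)/(2*δ) = (2*δ/(1+2*δ))⁻¹ := by rw [inv_div]
    rw [e]
    gcongr
  calc ∑ i ∈ Finset.Icc 1 k, Real.exp (-2 * (1 + δ) ^ (i - 1))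
      ≤ Real.exp (-2) * ∑ j ∈ Finset.range k, r ^ j := by rw [← hgeo]; exact hsum
    _ ≤ (1/2) * ((1 + 2*δ) / (2*δ)) := by
        apply mul_le_mul he2 (hgs.trans hinv)
          (Finset.sum_nonneg fun j _ => le_of_lt (pow_pos hr0 j)) (by norm_num)
    _ ≤ 1 + 1 / δ := by
        have e : (1:ℝ)/2 * ((1 + 2*δ) / (2*δ)) = (1+2*δ)/(4*δ) := by ring
        rw [e, div_le_iff₀ (by positivity : (0:ℝ) < 4*δ)]
        have e2 : (1 + 1/δ) * (4*δ) = 4*δ + 4 := by field_simp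
        rw [e2]
        linarith
end

section
/- For every real $\delta > 0$, every real $A \ge 8$, and every positive integer $k$, $\sum_{i=1}^{k} \exp\left(-\frac{A}{2}(1+\delta)^{i-1}\right) \le \exp\left(-\frac{A}{4}\right)\left(1 + \frac{1}{\delta}\right)$. -/
theorem sum_exp_scaled_le (δ : ℝ) (hδ : 0 < δ) (A : ℝ) (hA : 8 ≤ A) (k : ℕ) (hk : 1 ≤ k) :
    ∑ i ∈ Finset.Icc 1 k, Real.exp (-(A / 2) * (1 + δ) ^ (i - 1)) ≤
      Real.exp (-(A / 4)) * (1 + 1 / δ) := by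
  set r : ℝ := Real.exp (-(2 * δ)) with hrdef
  have hr0 : 0 < r := Real.exp_pos _
  have hr1 : r < 1 := by
    rw [hrdef, Real.exp_lt_one_iff]; linarith
  -- termwise bound
  have hterm : ∀ i ∈ Finset.Icc 1 k,
      Real.exp (-(A / 2) * (1 + δ) ^ (i - 1)) ≤ Real.exp (-(A / 4)) * r ^ (i - 1) := by
    intro i _
    set n := i - 1 with hn
    have hx1 : (1 : ℝ) ≤ (1 + δ) ^ n := one_le_pow₀ (by linarith)
    have hxn : 1 + (n : ℝ) * δ ≤ (1 + δ) ^ n := by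
      have := one_add_mul_le_pow (by linarith : (-2 : ℝ) ≤ δ) n
      linarith
    rw [hrdef, ← Real.exp_nat_mul, ← Real.exp_add]
    apply Real.exp_le_exp.2
    have hn0 : (0 : ℝ) ≤ (n : ℝ) := Nat.cast_nonneg _
    nlinarith [mul_nonneg hn0 hδ.le]
  calc ∑ i ∈ Finset.Icc 1 k, Real.exp (-(A / 2) * (1 + δ) ^ (i - 1))
      ≤ ∑ i ∈ Finset.Icc 1 k, Real.exp (-(A / 4)) * r ^ (i - 1) :=
        Finset.sum_le_sum hterm
    _ = Real.exp (-(A / 4)) * ∑ i ∈ Finset.Icc 1 k, r ^ (i - 1) := by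
        rw [Finset.mul_sum]
    _ ≤ Real.exp (-(A / 4)) * (1 + 1 / δ) := by
        apply mul_le_mul_of_nonneg_left _ (Real.exp_pos _).le
        rw [← Finset.Ico_add_one_right_eq_Icc, Finset.sum_Ico_eq_sum_range]
        simp only [Nat.add_sub_cancel, Nat.add_sub_cancel_left, Nat.succ_sub_one]
        have hsum : ∑ j ∈ Finset.range k, r ^ j = (1 - r ^ k) / (1 - r) := by
          rw [geom_sum_eq (ne_of_lt hr1), ← neg_sub (1:ℝ) r, ← neg_sub (1:ℝ) (r ^ k),
            neg_div_neg_eq]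
        rw [hsum]
        have h1r : 0 < 1 - r := by linarith
        rw [div_le_iff₀ h1r]
        have hrk : 0 ≤ r ^ k := pow_nonneg hr0.le k
        have hexp : 1 + 2 * δ ≤ Real.exp (2 * δ) := by
          have := Real.add_one_le_exp (2 * δ); linarith
        have h2 : r * (1 + 2 * δ) ≤ 1 := by
          rw [hrdef, Real.exp_neg, inv_mul_le_iff₀ (Real.exp_pos _)]
          linarith
        have hinv : δ * (1 / δ) = 1 := mul_one_div_cancel hδ.ne'
        nlinarith [h2, hrk, hinv, mul_pos hr0 hδ]
end

section
/- For every real $r > 0$ and every real $\gamma$ with $0 \le \gamma \le r(e-1)$, the Myerson payment satisfies $Q_{f_r}(\gamma) = re\,f_r(\gamma) - r(e-1) + \gamma$. -/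
open Real MeasureTheory

/-- The AGN allocation function `f_r`. -/
noncomputable def agnAlloc (r γ : ℝ) : ℝ :=
  if γ < r * (Real.exp 1 - 1) then Real.log (Real.exp 1 - γ / r) else 0

/-- The Myerson payment associated with `f_r`:
`Q_{f_r}(γ) = γ f_r(γ) + ∫_γ^∞ f_r(u) du`. -/
noncomputable def agnPayment (r γ : ℝ) : ℝ :=
  γ * agnAlloc r γ + ∫ u in Set.Ioi γ, agnAlloc r u

lemma agn_pos_aux {r u : ℝ} (hr : 0 < r) (hu : u ≤ r * (Real.exp 1 - 1)) :
    0 < Real.exp 1 - u / r := by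
  have h1 : u / r ≤ Real.exp 1 - 1 := by
    rw [div_le_iff₀ hr]; linarith [hu]
  linarith

lemma agn_hasDerivAt (r : ℝ) (hr : 0 < r) {u : ℝ} (h : 0 < Real.exp 1 - u / r) :
    HasDerivAt (fun u => -r * ((Real.exp 1 - u / r) * (Real.log (Real.exp 1 - u / r) - 1)))
      (Real.log (Real.exp 1 - u / r)) u := by
  have hg : HasDerivAt (fun u : ℝ => Real.exp 1 - u / r) (-(1 / r)) u := by
    simpa using ((hasDerivAt_id u).div_const r).const_sub (Real.exp 1)
  have hlog : HasDerivAt (fun u : ℝ => Real.log (Real.exp 1 - u / r))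
      ((Real.exp 1 - u / r)⁻¹ * (-(1 / r))) u :=
    by have := (Real.hasDerivAt_log h.ne').comp u hg; exact this
  have := ((hg.mul (hlog.sub_const 1)).const_mul (-r))
  refine this.congr_deriv ?_
  have h2 : (Real.exp 1 - u / r) * ((Real.exp 1 - u / r)⁻¹ * -(1 / r)) = -(1 / r) := by
    rw [← mul_assoc, mul_inv_cancel₀ h.ne', one_mul]
  rw [h2]
  set L := Real.log (Real.exp 1 - u / r)
  field_simp
  ring

theorem agnPayment_eq (r : ℝ) (hr : 0 < r) (γ : ℝ)
    (hγ₀ : 0 ≤ γ) (hγ₁ : γ ≤ r * (Real.exp 1 - 1)) :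
    agnPayment r γ =
      r * Real.exp 1 * agnAlloc r γ - r * (Real.exp 1 - 1) + γ := by
  set b := r * (Real.exp 1 - 1) with hb
  have hbr : Real.exp 1 - b / r = 1 := by rw [hb]; field_simp; ring
  have halloc : ∀ u ≤ b, agnAlloc r u = Real.log (Real.exp 1 - u / r) := by
    intro u hu
    rcases lt_or_eq_of_le hu with h | h
    · simp [agnAlloc, show u < r * (Real.exp 1 - 1) from h]
    · simp [agnAlloc, h, hbr]
  have key : Set.EqOn (agnAlloc r)
      ((Set.Ioc γ b).indicator (fun u => Real.log (Real.exp 1 - u / r))) (Set.Ioi γ) := by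
    intro u hu
    rcases le_or_gt u b with h | h
    · rw [halloc u h, Set.indicator_of_mem (Set.mem_Ioc.mpr ⟨hu, h⟩)]
    · rw [Set.indicator_of_notMem (by simp [Set.mem_Ioc]; intro _; linarith)]
      simp [agnAlloc, show ¬ u < r * (Real.exp 1 - 1) from not_lt.mpr h.le]
  have hint : (∫ u in Set.Ioi γ, agnAlloc r u)
      = ∫ u in γ..b, Real.log (Real.exp 1 - u / r) := by
    rw [setIntegral_congr_fun measurableSet_Ioi key,
      setIntegral_indicator measurableSet_Ioc,
      Set.inter_eq_right.mpr Set.Ioc_subset_Ioi_self,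
      intervalIntegral.integral_of_le hγ₁]
  have hcont : ContinuousOn (fun u => Real.log (Real.exp 1 - u / r)) (Set.uIcc γ b) := by
    apply ContinuousOn.log
    · fun_prop
    · intro u hu
      rw [Set.uIcc_of_le hγ₁] at hu
      exact (agn_pos_aux hr hu.2).ne'
  have hftc : (∫ u in γ..b, Real.log (Real.exp 1 - u / r))
      = (-r * ((Real.exp 1 - b / r) * (Real.log (Real.exp 1 - b / r) - 1)))
        - (-r * ((Real.exp 1 - γ / r) * (Real.log (Real.exp 1 - γ / r) - 1))) := by
    refine intervalIntegral.integral_eq_sub_of_hasDerivAt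
      (f := fun u => -r * ((Real.exp 1 - u / r) * (Real.log (Real.exp 1 - u / r) - 1)))
      (fun u hu => agn_hasDerivAt r hr (agn_pos_aux hr ?_)) hcont.intervalIntegrable
    rw [Set.uIcc_of_le hγ₁] at hu
    exact hu.2
  rw [agnPayment, hint, hftc, halloc γ hγ₁, hbr]
  simp only [Real.log_one]
  have hγr : γ / r * r = γ := div_mul_cancel₀ γ hr.ne'
  rw [hb]
  linear_combination (1 - Real.log (Real.exp 1 - γ / r)) * hγr
end

section
/- Let $0 < b < a$ be reals and define $F(c) = \frac{b}{a-c}$ for $c \in [0, a-b]$. Let $x \in [0, a-b]$ and suppose $y \in [0, a-b]$ satisfies $y\,F(y) = \frac{bx}{a-x} + b\ln\left(\frac{a-x}{a}\right)$. Then $\frac{F(y)}{F(x)} = 1 + \frac{a-x}{a}\,\ln\left(\frac{a-x}{a}\right)$. -/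
theorem competitive_ratio_worst_cdf (a b : ℝ) (hb : 0 < b) (hab : b < a)
    (F : ℝ → ℝ) (hF : ∀ c ∈ Set.Icc (0 : ℝ) (a - b), F c = b / (a - c))
    (x : ℝ) (hx : x ∈ Set.Icc (0 : ℝ) (a - b))
    (y : ℝ) (hy : y ∈ Set.Icc (0 : ℝ) (a - b))
    (hyF : y * F y = b * x / (a - x) + b * Real.log ((a - x) / a)) :
    F y / F x = 1 + (a - x) / a * Real.log ((a - x) / a) := by
  have hax : 0 < a - x := by have := hx.2; linarith
  have hay : 0 < a - y := by have := hy.2; linarith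
  have ha : 0 < a := by linarith
  rw [hF y hy] at hyF ⊢
  rw [hF x hx]
  set L := Real.log ((a - x) / a) with hL
  field_simp at hyF ⊢
  nlinarith [hyF, mul_pos hax hay]
end

section
/- For all integers $i, j$ with $2 \le i \le j$, $e_{i,j+1} \le \frac{3}{2+\sqrt{2}}\,e_{i,j}$; in particular, since $\frac{3}{2+\sqrt{2}} < 1$ and $e_{i,j} > 0$, the quantity $e_{i,j}$ is strictly decreasing in $j$ for each fixed $i \ge 2$. -/
/-- `q = 1 + 1/√2`. -/
noncomputable def qval : ℝ := 1 + 1 / Real.sqrt 2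

/-- Utilities of the groups: `u₀ = 1` and `u_t = 2^(t-1)` for `t ≥ 1`. -/
noncomputable def hardU : ℕ → ℝ := fun t => if t = 0 then 1 else 2 ^ (t - 1)

/-- Cost-per-utility ratios: `γ₀ = 0` and `γ_t = q^(t-1)` for `t ≥ 1`. -/
noncomputable def hardGamma : ℕ → ℝ := fun t => if t = 0 then 0 else qval ^ (t - 1)

/-- Marginal utility per marginal Myerson payment `e_{i,j}` of simultaneously
buying groups `i` through `j`. -/
noncomputable def eRate (i j : ℕ) : ℝ :=
  (∑ t ∈ Finset.Icc i j, hardU t) /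
    ((hardGamma j - hardGamma (i - 1)) * (∑ t ∈ Finset.range i, hardU t) +
      hardGamma j * (∑ t ∈ Finset.Icc i j, hardU t))

lemma sqrt2_pos : (0:ℝ) < Real.sqrt 2 := Real.sqrt_pos.2 (by norm_num)

lemma sqrt2_sq : Real.sqrt 2 * Real.sqrt 2 = 2 := Real.mul_self_sqrt (by norm_num)

lemma sqrt2_lt_two : Real.sqrt 2 < 2 := by
  nlinarith [sqrt2_sq, sqrt2_pos]

lemma sqrt2_gt_one : 1 < Real.sqrt 2 := by
  nlinarith [sqrt2_sq, sqrt2_pos]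

lemma qval_gt : 3/2 < qval := by
  have h : (1:ℝ)/2 < 1 / Real.sqrt 2 := by
    rw [div_lt_div_iff₀ (by norm_num) sqrt2_pos]
    linarith [sqrt2_lt_two]
  unfold qval; linarith

lemma two_qval : 2 * qval = 2 + Real.sqrt 2 := by
  unfold qval
  field_simp
  nlinarith [sqrt2_sq]

lemma sum_range_hardU (k : ℕ) : ∑ t ∈ Finset.range (k+1), hardU t = 2 ^ k := by
  induction k with
  | zero => simp [hardU]
  | succ n ih =>
    rw [Finset.sum_range_succ, ih]
    simp only [hardU, Nat.succ_ne_zero, if_false, Nat.add_sub_cancel]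
    ring

lemma sum_Icc_hardU (i j : ℕ) (hi : 1 ≤ i) (hij : i ≤ j) :
    ∑ t ∈ Finset.Icc i j, hardU t = 2 ^ j - 2 ^ (i - 1) := by
  rw [← Finset.Ico_add_one_right_eq_Icc, Finset.sum_Ico_eq_sub _ (by omega)]
  obtain ⟨k, rfl⟩ : ∃ k, i = k + 1 := ⟨i - 1, by omega⟩
  rw [sum_range_hardU, sum_range_hardU]
  simp

lemma hardGamma_succ (k : ℕ) : hardGamma (k + 1) = qval ^ k := by
  simp [hardGamma]

lemma eRate_eq (m n : ℕ) : eRate (m+2) (n+m+2) =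
    ((2:ℝ) ^ (n+m+2) - 2 ^ (m+1)) /
      (qval ^ (n+m+1) * 2 ^ (n+m+2) - qval ^ m * 2 ^ (m+1)) := by
  unfold eRate
  rw [sum_Icc_hardU _ _ (by omega) (by omega)]
  have h1 : m + 2 - 1 = m + 1 := by omega
  have h2 : n + m + 2 = (n + m + 1) + 1 := by omega
  rw [h1, h2, hardGamma_succ, hardGamma_succ,
    show m + 2 = (m+1) + 1 from rfl, sum_range_hardU]
  congr 1
  ring

theorem eRate_strict_decreasing (i j : ℕ) (hi : 2 ≤ i) (hij : i ≤ j) :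
    eRate i (j + 1) ≤ 3 / (2 + Real.sqrt 2) * eRate i j ∧
    3 / (2 + Real.sqrt 2) < 1 ∧ 0 < eRate i j ∧ eRate i (j + 1) < eRate i j := by
  obtain ⟨m, rfl⟩ : ∃ m, i = m + 2 := ⟨i - 2, by omega⟩
  obtain ⟨n, rfl⟩ : ∃ n, j = n + m + 2 := ⟨j - m - 2, by omega⟩
  have hjq : n + m + 2 + 1 = (n + 1) + m + 2 := by omega
  rw [hjq, eRate_eq m n, eRate_eq m (n+1)]
  have hq : 3/2 < qval := qval_gt
  have hqpos : (0:ℝ) < qval := by linarith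
  have hk : 3 / (2 + Real.sqrt 2) = 3 / (2 * qval) := by rw [two_qval]
  set A : ℝ := 2 ^ (n+m+2) with hA
  set B : ℝ := 2 ^ (m+1) with hB
  set P : ℝ := qval ^ (n+m+1) with hP
  set Q : ℝ := qval ^ m with hQ
  have hBpos : (0:ℝ) < B := by positivity
  have hQpos : (0:ℝ) < Q := pow_pos hqpos m
  have hPpos : (0:ℝ) < P := pow_pos hqpos _
  have hApos : (0:ℝ) < A := by positivity
  have hAB : 2 * B ≤ A := by
    rw [hA, hB]
    have h : (2:ℝ) * 2 ^ (m+1) = 2 ^ (m+2) := by ring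
    rw [h]
    exact pow_le_pow_right₀ (by norm_num) (by omega)
  have hPQ : qval * Q ≤ P := by
    rw [hP, hQ]
    have h : qval * qval ^ m = qval ^ (m+1) := by ring
    rw [h]
    exact pow_le_pow_right₀ (by linarith) (by omega)
  have hP' : qval ^ (n+1+m+1) = qval * P := by rw [hP]; ring_nf
  have hA' : (2:ℝ) ^ (n+1+m+2) = 2 * A := by rw [hA]; ring_nf
  rw [hP', hA']
  have hX : (0:ℝ) < P * A := mul_pos hPpos hApos
  have hQB : (0:ℝ) < Q * B := mul_pos hQpos hBpos
  have hD1 : 0 < P * A - Q * B := by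
    have h1 : Q * B < qval * Q * (2 * B) := by nlinarith
    have h2 : qval * Q * (2 * B) ≤ P * A :=
      mul_le_mul hPQ hAB (by linarith) (le_of_lt hPpos)
    linarith
  have hD2 : 0 < qval * P * (2 * A) - Q * B := by
    have h3 := mul_lt_mul_of_pos_right hq hX
    nlinarith
  have hN1 : 0 < A - B := by linarith
  have hN2 : 0 < 2 * A - B := by linarith
  have hle : (2 * A - B) / (qval * P * (2 * A) - Q * B) ≤
      3 / (2 + Real.sqrt 2) * ((A - B) / (P * A - Q * B)) := by
    rw [hk]
    rw [div_mul_div_comm, div_le_div_iff₀ hD2 (by positivity)]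
    have t1 : 0 ≤ (2*qval*(P*A)) * (A - 2*B) :=
      mul_nonneg (le_of_lt (mul_pos (by linarith) hX)) (by linarith)
    have t2 : 0 ≤ ((4*qval-3)*(A-B)) * (Q*B) :=
      mul_nonneg (mul_nonneg (by linarith) (by linarith)) (le_of_lt hQB)
    have t3 : 0 ≤ (2*qval*(Q*B)) * B :=
      mul_nonneg (le_of_lt (mul_pos (by linarith) hQB)) (le_of_lt hBpos)
    nlinarith [t1, t2, t3]
  have hkl : 3 / (2 + Real.sqrt 2) < 1 := by
    rw [div_lt_one (by positivity)]
    linarith [sqrt2_gt_one]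
  have hpos : 0 < (A - B) / (P * A - Q * B) := div_pos hN1 hD1
  refine ⟨hle, hkl, hpos, ?_⟩
  calc (2 * A - B) / (qval * P * (2 * A) - Q * B)
      ≤ 3 / (2 + Real.sqrt 2) * ((A - B) / (P * A - Q * B)) := hle
    _ < 1 * ((A - B) / (P * A - Q * B)) := mul_lt_mul_of_pos_right hkl hpos
    _ = (A - B) / (P * A - Q * B) := one_mul _
end

section
/- Let $q = 1 + 1/\sqrt{2}$. For every integer $k \ge 1$, $\frac{2^{k}}{2^{k} + \left(2^{k} q^{k-1} - \frac{2^{k} q^{k} - 1}{2q - 1}\right)\big/ q^{k}} \;\le\; \frac{2+\sqrt{2}}{4} \;<\; 0.854$. -/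
theorem greedy_ratio_at_peak_le (k : ℕ) (hk : 1 ≤ k) :
    (2 : ℝ) ^ k /
        ((2 : ℝ) ^ k +
          ((2 : ℝ) ^ k * qval ^ (k - 1) - ((2 : ℝ) ^ k * qval ^ k - 1) / (2 * qval - 1)) /
            qval ^ k) ≤ (2 + Real.sqrt 2) / 4 ∧
    (2 + Real.sqrt 2) / 4 < 0.854 := by
  have hs2 : Real.sqrt 2 ^ 2 = 2 := Real.sq_sqrt (by norm_num)
  have hs0 : (0:ℝ) ≤ Real.sqrt 2 := Real.sqrt_nonneg 2
  have hs1 : 1 < Real.sqrt 2 := by nlinarith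
  set s := Real.sqrt 2 with hsdef
  have hsne : s ≠ 0 := by positivity
  have hq : qval = 1 + 1 / s := rfl
  have hq0 : 0 < qval := by rw [hq]; positivity
  have h1s : 0 < 1 / s := by positivity
  have h2q : 0 < 2 * qval - 1 := by rw [hq]; linarith
  have hqq : 2 * qval ^ 2 - 4 * qval + 1 = 0 := by
    rw [hq]; field_simp; nlinarith
  have h24 : (2 + s) / 4 = qval / 2 := by
    rw [hq]; field_simp; nlinarith
  set b := qval ^ (k - 1) with hbdef
  have hb0 : 0 < b := pow_pos hq0 _
  have hqk : qval ^ k = qval * b := by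
    rw [hbdef, mul_comm, ← pow_succ, Nat.sub_add_cancel hk]
  set P := (2:ℝ) ^ k with hPdef
  have hP0 : 0 < P := pow_pos (by norm_num) _
  have key : qval / 2 * (P + (P * b - (P * (qval * b) - 1) / (2 * qval - 1)) / (qval * b))
      - (P + 1 / (2 * b * (2 * qval - 1)))
      = P * (2 * qval ^ 2 - 4 * qval + 1) / (2 * (2 * qval - 1)) := by
    have h2q' : 2 * qval - 1 ≠ 0 := h2q.ne'
    field_simp
    have hx : (-1 + qval * 2)⁻¹ * (-1 + qval * 2) = 1 := inv_mul_cancel₀ (by linarith)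
    linear_combination (-(P * b * (qval - 1))) * hx
  rw [hqq] at key
  have key' : qval / 2 * (P + (P * b - (P * (qval * b) - 1) / (2 * qval - 1)) / (qval * b))
      = P + 1 / (2 * b * (2 * qval - 1)) := by
    have : P * 0 / (2 * (2 * qval - 1)) = 0 := by ring
    linarith [key, this]
  have hpos : 0 < 1 / (2 * b * (2 * qval - 1)) := by positivity
  have hD : 0 < P + (P * b - (P * (qval * b) - 1) / (2 * qval - 1)) / (qval * b) := by
    nlinarith [key']
  constructor
  · rw [hqk, h24, div_le_iff₀ hD]
    nlinarith [key', hpos]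
  · nlinarith
end
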